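/- arXiv:1008.0852 — 2 statements merged into one kernel-verified Lean document; each statement's English description precedes it below -/
import Mathlib

section
/- Let G be a simply connected domain in the complex plane, and let (f_n) be a sequence of functions analytic on G such that the series \sum_{n=1}^{\infty} f_n(s) converges absolutely at almost every point of G (with respect to Lebesgue measure on the plane), and such that the function \Phi(\sigma,t) = \sum_{n=1}^{\infty} |f_n(\sigma+it)| is Lebesgue integrable on G. Then the series \sum_{n=1}^{\infty} f_n(s) converges uniformly on every compact subset of G, and its sum is analytic on G. -/
/-!
By the mean value property and polar coordinates, a function `g` holomorphic near a closed disc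
of radius `r` about `c` satisfies `π r² ‖g c‖ ≤ ∫_{B(c,r)} ‖g‖`. For a compact `K ⊆ G` and a
fixed `δ > 0` with the `δ`-thickening of `K` inside `G`, this bounds `‖f_n‖` on `K` by
`(π δ²)⁻¹ ∫_G ‖f_n‖`, and these bounds are summable because `∑ₙ ∫_G ‖f_n‖ = ∫_G ∑ₙ ‖f_n‖ < ∞`.
The Weierstrass M-test gives uniform convergence on `K`, and a locally uniform limit of
holomorphic functions is holomorphic.
-/

set_option autoImplicit false
open MeasureTheory Filter Metric Real Set

section PolarCoordinates

variable {E : Type*} [NormedAddCommGroup E] [NormedSpace ℝ E]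

theorem circleMap_mem_ball_iff {c : ℂ} {ρ r θ : ℝ} (hρ : 0 < ρ) :
    circleMap c ρ θ ∈ ball c r ↔ ρ < r := by
  rw [mem_ball, dist_eq_norm, circleMap_sub_center, norm_circleMap_zero, abs_of_pos hρ]

theorem setIntegral_ball_eq_setIntegral_polar (g : ℂ → E) (c : ℂ) (r : ℝ) :
    ∫ w in ball c r, g w = ∫ p in Ioo 0 r ×ˢ Ioo (-π) π, p.1 • g (circleMap c p.1 p.2) := by
  have hpolar : ∀ p : ℝ × ℝ, c + Complex.polarCoord.symm p = circleMap c p.1 p.2 := fun p => by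
    simp [circleMap, Complex.exp_mul_I]
  have hind : ∀ p ∈ Complex.polarCoord.target,
      p.1 • (ball c r).indicator g (circleMap c p.1 p.2)
        = (Ioo 0 r ×ˢ Ioo (-π) π).indicator (fun p => p.1 • g (circleMap c p.1 p.2)) p := by
    rintro ⟨ρ, θ⟩ ⟨hρ, hθ⟩
    by_cases hρr : ρ < r
    · simp [hρr, hθ, hρ.out, circleMap_mem_ball_iff hρ.out]
    · simp [hρr, circleMap_mem_ball_iff hρ.out]
  calc ∫ w in ball c r, g w = ∫ w, (ball c r).indicator g (c + w) := by
        rw [integral_add_left_eq_self, integral_indicator measurableSet_ball]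
    _ = ∫ p in Complex.polarCoord.target,
          (Ioo 0 r ×ˢ Ioo (-π) π).indicator (fun p => p.1 • g (circleMap c p.1 p.2)) p := by
        rw [← Complex.integral_comp_polarCoord_symm]
        simp only [hpolar]
        exact setIntegral_congr_fun Complex.polarCoord.open_target.measurableSet hind
    _ = _ := by
        rw [setIntegral_indicator (measurableSet_Ioo.prod measurableSet_Ioo),
          inter_eq_self_of_subset_right]
        exact prod_mono Ioo_subset_Ioi_self subset_rfl

theorem setIntegral_Ioo_circleMap_eq_smul_circleAverage (g : ℂ → E) (c : ℂ) (ρ : ℝ) :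
    ∫ θ in Ioo (-π) π, g (circleMap c ρ θ) = (2 * π) • circleAverage g c ρ := by
  have hper : Function.Periodic (fun θ => g (circleMap c ρ θ)) (2 * π) := fun θ => by
    simp [periodic_circleMap c ρ θ]
  rw [circleAverage_def, smul_inv_smul₀ (by positivity), ← integral_Ioc_eq_integral_Ioo,
    ← intervalIntegral.integral_of_le (by linarith [pi_pos]),
    ← zero_add (2 * π), ← hper.intervalIntegral_add_eq (-π) 0]
  ring_nf

theorem setIntegral_ball_eq_integral_circleAverage {g : ℂ → E} {c : ℂ} {r : ℝ} (hr : 0 ≤ r)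
    (hg : ContinuousOn g (closedBall c r)) :
    ∫ w in ball c r, g w = ∫ ρ in 0..r, (2 * π * ρ) • circleAverage g c ρ := by
  have hmaps : MapsTo (fun p : ℝ × ℝ => circleMap c p.1 p.2) (Icc 0 r ×ˢ Icc (-π) π)
      (closedBall c r) := fun p hp => by
    simpa [dist_eq_norm, circleMap_sub_center, abs_of_nonneg hp.1.1] using hp.1.2
  have hint : IntegrableOn (fun p : ℝ × ℝ => p.1 • g (circleMap c p.1 p.2))
      (Ioo 0 r ×ˢ Ioo (-π) π) (volume.prod volume) := by
    refine (ContinuousOn.integrableOn_compact (isCompact_Icc.prod isCompact_Icc) ?_).mono_set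
      (prod_mono Ioo_subset_Icc_self Ioo_subset_Icc_self)
    exact continuousOn_fst.smul (hg.comp (by fun_prop) hmaps)
  rw [setIntegral_ball_eq_setIntegral_polar, Measure.volume_eq_prod, setIntegral_prod _ hint,
    intervalIntegral.integral_of_le hr, integral_Ioc_eq_integral_Ioo]
  refine setIntegral_congr_fun measurableSet_Ioo fun ρ _ => ?_
  rw [integral_smul, setIntegral_Ioo_circleMap_eq_smul_circleAverage, smul_smul, mul_comm ρ]

theorem norm_circleAverage_le (g : ℂ → E) (c : ℂ) (ρ : ℝ) :
    ‖circleAverage g c ρ‖ ≤ Real.circleAverage (fun w => ‖g w‖) c ρ := by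
  rw [circleAverage_def, circleAverage_def, norm_smul, smul_eq_mul, norm_inv,
    Real.norm_of_nonneg (by positivity)]
  gcongr
  exact intervalIntegral.norm_integral_le_integral_norm (by positivity)

end PolarCoordinates

section Series

variable {α F : Type*} [MeasurableSpace α] {μ : Measure α} [NormedAddCommGroup F]
  {f : ℕ → α → F}

theorem integrable_of_integrable_tsum_norm (hf : ∀ n, AEStronglyMeasurable (f n) μ)
    (hs : ∀ᵐ x ∂μ, Summable fun n => ‖f n x‖) (hi : Integrable (fun x => ∑' n, ‖f n x‖) μ)
    (n : ℕ) : Integrable (f n) μ :=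
  hi.mono' (hf n) <| by
    filter_upwards [hs] with x hx using hx.le_tsum n fun _ _ => norm_nonneg _

theorem summable_integral_norm_of_integrable_tsum_norm
    (hf : ∀ n, AEStronglyMeasurable (f n) μ) (hs : ∀ᵐ x ∂μ, Summable fun n => ‖f n x‖)
    (hi : Integrable (fun x => ∑' n, ‖f n x‖) μ) :
    Summable fun n => ∫ x, ‖f n x‖ ∂μ := by
  have hfi := integrable_of_integrable_tsum_norm hf hs hi
  refine summable_of_sum_range_le (c := ∫ x, ∑' n, ‖f n x‖ ∂μ)
    (fun n => integral_nonneg fun _ => norm_nonneg _) fun N => ?_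
  rw [← integral_finsetSum _ fun n _ => (hfi n).norm]
  refine integral_mono_ae (integrable_finsetSum _ fun n _ => (hfi n).norm) hi ?_
  filter_upwards [hs] with x hx using hx.sum_le_tsum _ fun _ _ => norm_nonneg _

end Series

section Holomorphic

variable {F : Type*} [NormedAddCommGroup F] [NormedSpace ℂ F] [CompleteSpace F]

theorem DiffContOnCl.pi_mul_sq_mul_norm_le_setIntegral_norm {g : ℂ → F} {c : ℂ} {r : ℝ}
    (hr : 0 ≤ r) (hg : DiffContOnCl ℂ g (ball c r)) :
    π * r ^ 2 * ‖g c‖ ≤ ∫ w in ball c r, ‖g w‖ := by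
  have hsub : ∀ ρ ∈ Icc 0 r, ‖g c‖ ≤ Real.circleAverage (fun w => ‖g w‖) c ρ := fun ρ hρ => by
    have hgρ : DiffContOnCl ℂ g (ball c |ρ|) :=
      hg.mono (ball_subset_ball (by rw [abs_of_nonneg hρ.1]; exact hρ.2))
    rw [← hgρ.circleAverage]
    exact norm_circleAverage_le g c ρ
  have hcont : ContinuousOn (fun ρ => (2 * π * ρ) • Real.circleAverage (fun w => ‖g w‖) c ρ)
      (Icc 0 r) := by
    refine (continuousOn_const.mul continuousOn_id).smul (ContinuousOn.circleAverage ?_ ?_)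
    · refine hg.continuousOn_ball.norm.mono fun w hw => ?_
      simpa [dist_eq_norm] using hw.2
    · exact fun ρ hρ => hρ.1
  calc π * r ^ 2 * ‖g c‖ = ∫ ρ in 0..r, 2 * π * ρ * ‖g c‖ := by
        rw [intervalIntegral.integral_mul_const, intervalIntegral.integral_const_mul, integral_id]
        ring
    _ ≤ ∫ ρ in 0..r, (2 * π * ρ) • Real.circleAverage (fun w => ‖g w‖) c ρ := by
        refine intervalIntegral.integral_mono_on hr
          (Continuous.intervalIntegrable (by fun_prop) _ _)
          (hcont.intervalIntegrable_of_Icc hr) fun ρ hρ => ?_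
        rw [smul_eq_mul]
        gcongr
        · exact mul_nonneg (by positivity) hρ.1
        · exact hsub ρ hρ
    _ = ∫ w in ball c r, ‖g w‖ :=
        (setIntegral_ball_eq_integral_circleAverage hr hg.continuousOn_ball.norm).symm

theorem DifferentiableOn.norm_le_integral_norm {U : Set ℂ} {g : ℂ → F}
    (hg : DifferentiableOn ℂ g U) (hgi : IntegrableOn g U) {c : ℂ} {r : ℝ} (hr : 0 < r)
    (hcU : closedBall c r ⊆ U) :
    ‖g c‖ ≤ (π * r ^ 2)⁻¹ * ∫ w in U, ‖g w‖ := by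
  rw [inv_mul_eq_div, le_div_iff₀' (by positivity)]
  calc π * r ^ 2 * ‖g c‖ ≤ ∫ w in ball c r, ‖g w‖ :=
        (hg.diffContOnCl_ball hcU).pi_mul_sq_mul_norm_le_setIntegral_norm hr.le
    _ ≤ ∫ w in U, ‖g w‖ :=
        setIntegral_mono_set hgi.norm (.of_forall fun _ => norm_nonneg _)
          (ball_subset_closedBall.trans hcU).eventuallyLE

theorem tendstoUniformlyOn_tsum_of_integrableOn_tsum_norm {G : Set ℂ} (hG : IsOpen G)
    {f : ℕ → ℂ → F} (hf : ∀ n, DifferentiableOn ℂ (f n) G)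
    (hae : ∀ᵐ s ∂(volume.restrict G), Summable fun n => ‖f n s‖)
    (hint : IntegrableOn (fun s => ∑' n, ‖f n s‖) G) {K : Set ℂ} (hKG : K ⊆ G)
    (hK : IsCompact K) :
    TendstoUniformlyOn (fun N s => ∑ n ∈ Finset.range N, f n s) (fun s => ∑' n, f n s)
      atTop K := by
  obtain ⟨δ, hδ, hKδ⟩ := hK.exists_cthickening_subset_open hG hKG
  have hmeas n : AEStronglyMeasurable (f n) (volume.restrict G) :=
    (hf n).continuousOn.aestronglyMeasurable hG.measurableSet
  refine tendstoUniformlyOn_tsum_nat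
    ((summable_integral_norm_of_integrable_tsum_norm hmeas hae hint).mul_left (π * δ ^ 2)⁻¹)
    fun n z hz => ?_
  exact (hf n).norm_le_integral_norm (integrable_of_integrable_tsum_norm hmeas hae hint n) hδ
    ((closedBall_subset_cthickening hz δ).trans hKδ)

end Holomorphic

theorem stmt_0_general (G : Set ℂ) (hG : IsOpen G)
    (f : ℕ → ℂ → ℂ) (hf : ∀ n, DifferentiableOn ℂ (f n) G)
    (hae : ∀ᵐ s ∂(volume.restrict G), Summable fun n => ‖f n s‖)
    (hint : IntegrableOn (fun s => ∑' n, ‖f n s‖) G volume) :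
    (∀ K ⊆ G, IsCompact K →
      TendstoUniformlyOn (fun N s => ∑ n ∈ Finset.range N, f n s)
        (fun s => ∑' n, f n s) atTop K) ∧
    DifferentiableOn ℂ (fun s => ∑' n, f n s) G := by
  have hunif := fun K (hKG : K ⊆ G) (hK : IsCompact K) =>
    tendstoUniformlyOn_tsum_of_integrableOn_tsum_norm hG hf hae hint hKG hK
  refine ⟨hunif, ?_⟩
  exact ((tendstoLocallyUniformlyOn_iff_forall_isCompact hG).2 hunif).differentiableOn
    (.of_forall fun N => DifferentiableOn.fun_sum fun n _ => hf n) hG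

/-- Lemma 1: a series of analytic functions on a simply connected domain `G`,
converging absolutely almost everywhere, whose sum of absolute values is integrable,
converges uniformly on compact subsets and has an analytic sum. -/
theorem stmt_0 (G : Set ℂ) (hG : IsOpen G) (hGconn : SimplyConnectedSpace G)
    (f : ℕ → ℂ → ℂ) (hf : ∀ n, DifferentiableOn ℂ (f n) G)
    (hae : ∀ᵐ s ∂(volume.restrict G), Summable fun n => ‖f n s‖)
    (hint : IntegrableOn (fun s => ∑' n, ‖f n s‖) G volume) :
    (∀ K ⊆ G, IsCompact K →
      TendstoUniformlyOn (fun N s => ∑ n ∈ Finset.range N, f n s)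
        (fun s => ∑' n, f n s) atTop K) ∧
    DifferentiableOn ℂ (fun s => ∑' n, f n s) G :=
  stmt_0_general G hG f hf hae hint
end

section
/- Let (\lambda_n) be a sequence of positive real numbers such that every finite subfamily is linearly independent over \mathbb{Q}. Then for any two distinct real numbers t_1 \ne t_2 and any bijection \sigma: \mathbb{N} \to \mathbb{N} fixing all but finitely many indices, the sequences (\{t_1 \lambda_n\})_{n\ge 1} and (\{t_2 \lambda_{\sigma(n)}\})_{n\ge 1} are not equal, where \{x\} denotes the fractional part of x. -/
set_option autoImplicit false

/-!
If `σ` fixes `p`, the hypothesis gives `{t₁ λₚ} = {t₂ λₚ}`, i.e. `(t₁ - t₂) λₚ ∈ ℤ`. A finite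
permutation has infinitely many fixed points, so this happens for two indices `n ≠ m`, and then
`λₙ / λₘ` is a ratio of integers, contradicting linear independence over `ℚ`.
-/

theorem LinearIndependent.eq_of_mul_eq_intCast {ι K : Type*} [Field K] [CharZero K]
    {v : ι → K} (hv : LinearIndependent ℚ v) {c : K} (hc : c ≠ 0) {i j : ι} {a b : ℤ}
    (hi : c * v i = a) (hj : c * v j = b) : i = j := by
  have hb : (b : ℚ) ≠ 0 := by
    have : (b : K) ≠ 0 := hj ▸ mul_ne_zero hc (hv.ne_zero j)
    exact_mod_cast this
  refine hv.eq_of_smul_apply_eq_smul_apply (b : ℚ) (a : ℚ) i j hb ?_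
  simp only [Rat.smul_def, Rat.cast_intCast, ← hi, ← hj]
  ring

theorem Int.fract_mul_eq_fract_mul_iff {R : Type*} [CommRing R] [LinearOrder R]
    [IsStrictOrderedRing R] [FloorRing R] (a b x : R) :
    Int.fract (a * x) = Int.fract (b * x) ↔ ∃ z : ℤ, (a - b) * x = z := by
  rw [Int.fract_eq_fract, sub_mul]

theorem stmt_14_general (l : ℕ → ℝ)
    (hind : LinearIndependent ℚ l)
    (t₁ t₂ : ℝ) (ht : t₁ ≠ t₂) (σ : Equiv.Perm ℕ)
    (hσ : {n : ℕ | σ n ≠ n}.Finite) :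
    ¬ ∀ n : ℕ, Int.fract (t₁ * l n) = Int.fract (t₂ * l (σ n)) := by
  intro h
  obtain ⟨n, hn, m, hm, hnm⟩ := hσ.infinite_compl.nontrivial
  have hint : ∀ p, σ p = p → ∃ z : ℤ, (t₁ - t₂) * l p = z := fun p hp ↦
    (Int.fract_mul_eq_fract_mul_iff t₁ t₂ (l p)).mp (by simpa only [hp] using h p)
  obtain ⟨zn, hzn⟩ := hint n (not_not.mp hn)
  obtain ⟨zm, hzm⟩ := hint m (not_not.mp hm)
  exact hnm (hind.eq_of_mul_eq_intCast (sub_ne_zero.mpr ht) hzn hzm)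

/-- If `(λₙ)` are positive reals, every finite subfamily of which is linearly
independent over `ℚ`, then for distinct reals `t₁ ≠ t₂` and any finite permutation
`σ` of `ℕ`, the sequences `({t₁ λₙ})` and `({t₂ λ_{σ(n)}})` are not equal. -/
theorem stmt_14 (l : ℕ → ℝ) (hpos : ∀ n, 0 < l n)
    (hind : LinearIndependent ℚ l)
    (t₁ t₂ : ℝ) (ht : t₁ ≠ t₂) (σ : Equiv.Perm ℕ)
    (hσ : {n : ℕ | σ n ≠ n}.Finite) :
    ¬ ∀ n : ℕ, Int.fract (t₁ * l n) = Int.fract (t₂ * l (σ n)) :=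
  stmt_14_general l hind t₁ t₂ ht σ hσ
end
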